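/- arXiv:2512.02583 — 2 statements merged into one kernel-verified Lean document; each statement's English description precedes it below -/
import Mathlib

section
/- Let ε ≥ 0 and ξ = (ξ₁, ξ₂, ξ₃) ∈ ℝ³, and let A(ξ) be the 4×4 complex matrix in block form A(ξ) = [[−|ξ|², iξᵗ],[iξ, −ε|ξ|² I₃]], i.e., A(ξ)₀₀ = −|ξ|², A(ξ)₀ⱼ = iξⱼ and A(ξ)ⱼ₀ = iξⱼ for j = 1,2,3, and A(ξ)ⱼₖ = −ε|ξ|² δⱼₖ for j,k = 1,2,3. Then for every λ ∈ ℂ: det(A(ξ) − λ I₄) = (λ + ε|ξ|²)² (λ² + (ε+1)|ξ|² λ + ε|ξ|⁴ + |ξ|²). -/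
/-!
`A(ξ) - λ I₄` is an arrowhead matrix `[[a, wᵀ], [w, d I₃]]` with `a = -|ξ|² - λ`,
`d = -ε|ξ|² - λ` and `w = iξ`. Right multiplication by `[[d, 0], [-w, I₃]]` makes such a
matrix block upper triangular, so `d · det = d³ (a d - w ⬝ w)`; cancelling `d` gives
`det = d² (a d - w ⬝ w)`, and `w ⬝ w = -|ξ|²` turns this into the stated factorisation.
-/

open Matrix Polynomial

namespace Matrix

variable {R : Type*} [CommRing R] {ι : Type*} [Fintype ι] [DecidableEq ι]

def arrowhead (a : R) (u v : ι → R) (d : R) : Matrix (Fin 1 ⊕ ι) (Fin 1 ⊕ ι) R :=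
  fromBlocks (of fun _ _ => a) (replicateRow (Fin 1) v) (replicateCol (Fin 1) u) (scalar ι d)

theorem arrowhead_sub_smul_one (a : R) (u v : ι → R) (d t : R) :
    arrowhead a u v d - t • 1 = arrowhead (a - t) u v (d - t) := by
  ext (i | i) (j | j)
  · simp [arrowhead, Subsingleton.elim i j]
  · simp [arrowhead]
  · simp [arrowhead]
  · by_cases h : i = j <;> simp [arrowhead, h]

theorem _root_.RingHom.mapMatrix_arrowhead {S : Type*} [CommRing S] (f : R →+* S) (a : R)
    (u v : ι → R) (d : R) :
    f.mapMatrix (arrowhead a u v d) = arrowhead (f a) (f ∘ u) (f ∘ v) (f d) := by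
  ext (_ | i) (_ | j) <;> simp [arrowhead, diagonal_apply, apply_ite f]

theorem mul_det_arrowhead (a : R) (u v : ι → R) (d : R) :
    d * (arrowhead a u v d).det = d ^ Fintype.card ι * (a * d - v ⬝ᵥ u) := by
  let N : Matrix (Fin 1 ⊕ ι) (Fin 1 ⊕ ι) R :=
    fromBlocks (of fun _ _ => d) 0 (-replicateCol (Fin 1) u) 1
  have hN : N.det = d := by simp [N]
  have hMN : arrowhead a u v d * N =
      fromBlocks (of fun _ _ => a * d - v ⬝ᵥ u) (replicateRow (Fin 1) v) 0 (scalar ι d) := by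
    rw [arrowhead, fromBlocks_multiply]
    ext (_ | i) (_ | j) <;>
      simp [mul_apply, diagonal_apply, dotProduct, sub_eq_add_neg, mul_comm]
  have := congrArg det hMN
  rw [det_mul, hN, det_fromBlocks_zero₂₁] at this
  simpa [mul_comm] using this

theorem det_arrowhead [Nonempty ι] (a : R) (u v : ι → R) (d : R) :
    (arrowhead a u v d).det = d ^ (Fintype.card ι - 1) * (a * d - v ⬝ᵥ u) := by
  -- `d` need not be cancellable in `R`, but `X` is in `R[X]`: prove the generic case there
  -- and specialise `X ↦ d`.
  have hX : (arrowhead (C a) (C ∘ u) (C ∘ v) X).det =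
      X ^ (Fintype.card ι - 1) * (C a * X - (C ∘ v) ⬝ᵥ (C ∘ u)) := by
    rw [← isRegular_X.left.eq_iff, mul_det_arrowhead, ← mul_assoc, ← pow_succ',
      Nat.sub_add_cancel Fintype.card_pos]
  have := congrArg (evalRingHom d) hX
  rw [RingHom.map_det, RingHom.mapMatrix_arrowhead] at this
  simpa [Function.comp_def, dotProduct, eval_finsetSum] using this

end Matrix

theorem det_linearized_symbol_general
    (ε : ℝ) (ξ₁ ξ₂ ξ₃ : ℝ)
    (s : ℂ) (hs : s = ((ξ₁ ^ 2 + ξ₂ ^ 2 + ξ₃ ^ 2 : ℝ) : ℂ))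
    (A : Matrix (Fin 4) (Fin 4) ℂ)
    (hA : A = !![-s, Complex.I * ξ₁, Complex.I * ξ₂, Complex.I * ξ₃;
                 Complex.I * ξ₁, -(ε : ℂ) * s, 0, 0;
                 Complex.I * ξ₂, 0, -(ε : ℂ) * s, 0;
                 Complex.I * ξ₃, 0, 0, -(ε : ℂ) * s])
    (lam : ℂ) :
    (A - lam • (1 : Matrix (Fin 4) (Fin 4) ℂ)).det =
      (lam + (ε : ℂ) * s) ^ 2 *
        (lam ^ 2 + ((ε : ℂ) + 1) * s * lam + (ε : ℂ) * s ^ 2 + s) := by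
  let w : Fin 3 → ℂ := ![Complex.I * ξ₁, Complex.I * ξ₂, Complex.I * ξ₃]
  have hw : w ⬝ᵥ w = -s := by
    simp only [w, dotProduct, Fin.sum_univ_three, hs]
    push_cast
    linear_combination (ξ₁ ^ 2 + ξ₂ ^ 2 + ξ₃ ^ 2 : ℂ) * Complex.I_sq
  let e : Fin 1 ⊕ Fin 3 ≃ Fin 4 := finSumFinEquiv
  have hblock : A.submatrix e e = arrowhead (-s) w w (-ε * s) := by
    subst hA
    ext (i | i) (j | j) <;> fin_cases i <;> fin_cases j <;> rfl
  have hshift : (A - lam • 1).submatrix e e = A.submatrix e e - lam • 1 := by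
    rw [← submatrix_one_equiv e]
    rfl
  rw [← det_submatrix_equiv_self e, hshift, hblock, arrowhead_sub_smul_one, det_arrowhead, hw,
    Fintype.card_fin]
  ring

/-- **Eigenvalue computation for the Fourier symbol (d = 3).**
For `ε ≥ 0` and `ξ = (ξ₁, ξ₂, ξ₃) ∈ ℝ³`, let `A(ξ)` be the 4×4 complex matrix
`[[−|ξ|², iξᵗ], [iξ, −ε|ξ|² I₃]]`.  Then for every `λ ∈ ℂ`,
`det(A(ξ) − λI₄) = (λ + ε|ξ|²)²(λ² + (ε+1)|ξ|²λ + ε|ξ|⁴ + |ξ|²)`. -/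
theorem det_linearized_symbol
    (ε : ℝ) (hε : 0 ≤ ε) (ξ₁ ξ₂ ξ₃ : ℝ)
    (s : ℂ) (hs : s = ((ξ₁ ^ 2 + ξ₂ ^ 2 + ξ₃ ^ 2 : ℝ) : ℂ))
    (A : Matrix (Fin 4) (Fin 4) ℂ)
    (hA : A = !![-s, Complex.I * ξ₁, Complex.I * ξ₂, Complex.I * ξ₃;
                 Complex.I * ξ₁, -(ε : ℂ) * s, 0, 0;
                 Complex.I * ξ₂, 0, -(ε : ℂ) * s, 0;
                 Complex.I * ξ₃, 0, 0, -(ε : ℂ) * s])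
    (lam : ℂ) :
    (A - lam • (1 : Matrix (Fin 4) (Fin 4) ℂ)).det =
      (lam + (ε : ℂ) * s) ^ 2 *
        (lam ^ 2 + ((ε : ℂ) + 1) * s * lam + (ε : ℂ) * s ^ 2 + s) :=
  det_linearized_symbol_general ε ξ₁ ξ₂ ξ₃ s hs A hA lam
end

section
/- Let d ∈ {2,3}, a > 0, and η > 0. Then there exist constants c > 0 and T > 0 such that for all t ≥ T: ∫_0^{η√t} e^{−a r²} cos²(r√t) r^{d−1} dr ≥ c. -/
open MeasureTheory Real intervalIntegral

noncomputable section

/-- **Oscillatory Gaussian lower bound.**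
For `d ∈ {2,3}`, `a > 0` and `η > 0` there are constants `c > 0` and `T > 0`
such that for all `t ≥ T`:
`∫_0^{η√t} e^{−ar²} cos²(r√t) r^{d−1} dr ≥ c`. -/
theorem oscillatory_gaussian_lower
    (d : ℕ) (hd : d = 2 ∨ d = 3) (a η : ℝ) (ha : 0 < a) (hη : 0 < η) :
    ∃ c > (0 : ℝ), ∃ T > (0 : ℝ), ∀ t ≥ T,
      c ≤ ∫ r in (0 : ℝ)..(η * Real.sqrt t),
            Real.exp (-a * r ^ 2) * Real.cos (r * Real.sqrt t) ^ 2 *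
              r ^ (d - 1) := by
  refine ⟨Real.exp (-(4 * a)) / 4, by positivity, max 16 ((2 / η) ^ 2),
    lt_of_lt_of_le (by norm_num) (le_max_left _ _), ?_⟩
  intro t ht
  set s := Real.sqrt t with hs_def
  have ht16 : (16 : ℝ) ≤ t := le_trans (le_max_left _ _) ht
  have hs4 : (4 : ℝ) ≤ s := by
    have : Real.sqrt 16 ≤ s := Real.sqrt_le_sqrt ht16
    rwa [show (16 : ℝ) = 4 ^ 2 by norm_num, Real.sqrt_sq (by norm_num : (0:ℝ) ≤ 4)] at this
  have hs0 : (0 : ℝ) < s := by linarith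
  have hηs : (2 : ℝ) ≤ η * s := by
    have h1 : (2 / η) ^ 2 ≤ t := le_trans (le_max_right _ _) ht
    have h2 : Real.sqrt ((2 / η) ^ 2) ≤ s := Real.sqrt_le_sqrt h1
    rw [Real.sqrt_sq (by positivity)] at h2
    calc (2 : ℝ) = η * (2 / η) := by field_simp
    _ ≤ η * s := by nlinarith
  set f : ℝ → ℝ := fun r => Real.exp (-a * r ^ 2) * Real.cos (r * s) ^ 2 * r ^ (d - 1)
    with hf_def
  have hfc : Continuous f := by
    apply Continuous.mul
    apply Continuous.mul
    · exact (Real.continuous_exp.comp (by continuity))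
    · exact (Real.continuous_cos.comp (by continuity)).pow 2
    · exact continuous_pow _
  -- step 1 : restrict to [1,2]
  have step1 : (∫ r in (1:ℝ)..2, f r) ≤ ∫ r in (0:ℝ)..(η * s), f r := by
    apply intervalIntegral.integral_mono_interval (by norm_num) (by norm_num)
      (by linarith) ?_ (hfc.intervalIntegrable _ _)
    filter_upwards [ae_restrict_mem measurableSet_Ioc] with x hx
    have hx0 : 0 ≤ x := le_of_lt hx.1
    positivity
  -- step 2 : pointwise lower bound on [1,2]
  have step2 : (∫ r in (1:ℝ)..2, Real.exp (-(4 * a)) * Real.cos (r * s) ^ 2)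
      ≤ ∫ r in (1:ℝ)..2, f r := by
    apply intervalIntegral.integral_mono_on (by norm_num)
    · exact (Continuous.intervalIntegrable (by continuity) _ _)
    · exact hfc.intervalIntegrable _ _
    intro x hx
    obtain ⟨hx1, hx2⟩ := hx
    have h1 : Real.exp (-(4 * a)) ≤ Real.exp (-a * x ^ 2) := by
      apply Real.exp_le_exp.mpr
      have hx4 : x ^ 2 ≤ 4 := by nlinarith
      nlinarith
    have h2 : (1:ℝ) ≤ x ^ (d - 1) := one_le_pow₀ (by linarith)
    have hcs : (0:ℝ) ≤ Real.cos (x * s) ^ 2 := sq_nonneg _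
    calc Real.exp (-(4 * a)) * Real.cos (x * s) ^ 2
        ≤ Real.exp (-a * x ^ 2) * Real.cos (x * s) ^ 2 :=
          mul_le_mul_of_nonneg_right h1 hcs
      _ ≤ Real.exp (-a * x ^ 2) * Real.cos (x * s) ^ 2 * x ^ (d - 1) :=
          le_mul_of_one_le_right (by positivity) h2
  -- step 3 : compute the cosine-squared integral
  have hcomp : (∫ r in (1:ℝ)..2, Real.cos (r * s) ^ 2)
      = s⁻¹ * ((Real.cos (2 * s) * Real.sin (2 * s)
          - Real.cos (1 * s) * Real.sin (1 * s) + 2 * s - 1 * s) / 2) := by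
    rw [intervalIntegral.integral_comp_mul_right (fun x => Real.cos x ^ 2) (ne_of_gt hs0),
      integral_cos_sq]
    simp [smul_eq_mul]
  have step3 : (1 : ℝ) / 4 ≤ ∫ r in (1:ℝ)..2, Real.cos (r * s) ^ 2 := by
    rw [hcomp]
    have b1 : -1 ≤ Real.cos (2 * s) * Real.sin (2 * s) := by
      nlinarith [Real.neg_one_le_cos (2*s), Real.cos_le_one (2*s),
        Real.neg_one_le_sin (2*s), Real.sin_le_one (2*s)]
    have b2 : Real.cos (1 * s) * Real.sin (1 * s) ≤ 1 := by
      nlinarith [Real.neg_one_le_cos (1*s), Real.cos_le_one (1*s),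
        Real.neg_one_le_sin (1*s), Real.sin_le_one (1*s)]
    rw [ge_iff_le, ← sub_nonneg] at *
    have hsi : s⁻¹ * s = 1 := inv_mul_cancel₀ (ne_of_gt hs0)
    have hsinv : s⁻¹ ≤ 1 / 4 := by
      rw [inv_le_comm₀ hs0 (by norm_num)]; linarith
    have hsinv0 : 0 < s⁻¹ := inv_pos.mpr hs0
    nlinarith
  -- combine
  have : Real.exp (-(4 * a)) / 4 ≤ ∫ r in (1:ℝ)..2, f r := by
    calc Real.exp (-(4 * a)) / 4
        = Real.exp (-(4 * a)) * (1 / 4) := by ring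
      _ ≤ Real.exp (-(4 * a)) * ∫ r in (1:ℝ)..2, Real.cos (r * s) ^ 2 :=
          mul_le_mul_of_nonneg_left step3 (Real.exp_nonneg _)
      _ = ∫ r in (1:ℝ)..2, Real.exp (-(4 * a)) * Real.cos (r * s) ^ 2 :=
          (intervalIntegral.integral_const_mul _ _).symm
      _ ≤ _ := step2
  linarith [step1]
end
end
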